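/- arXiv:1709.02334 — 2 statements merged into one kernel-verified Lean document; each statement's English description precedes it below -/
import Mathlib

section
/- Let τ be a finite unordered rooted tree, v a vertex of τ, w a child of v whose set of children is exactly {c}. Let θ be the tree obtained from τ by deleting the internal vertex w and making its unique child c a child of v. Then every vertex u of θ satisfies H(θ[u]) = H(τ[u]) if and only if there exists a child w' of v in τ with w' ≠ w and H(τ[w']) + 1 = H(τ[v]). -/
/-- A finite rooted tree whose vertices form a finite subset `supp` of `ℕ`.
`par` maps each vertex to its parent; the root is a fixed point of `par`
(so it has no parent), and every vertex reaches the root by iterating `par`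
(connectedness / acyclicity). -/
structure FTree where
  supp : Finset ℕ
  root : ℕ
  root_mem : root ∈ supp
  par : ℕ → ℕ
  par_mem : ∀ v ∈ supp, par v ∈ supp
  par_root : par root = root
  reach : ∀ v ∈ supp, ∃ n, par^[n] v = root

namespace FTree

/-- Depth of a vertex: least number of parent steps needed to reach the root. -/
noncomputable def depth (t : FTree) (v : ℕ) : ℕ :=
  if h : v ∈ t.supp then Nat.find (t.reach v h) else 0

/-- `w` is a (weak) descendant of `v` in `t`. -/
def IsDesc (t : FTree) (v w : ℕ) : Prop :=
  w ∈ t.supp ∧ ∃ n ≤ t.depth w, t.par^[n] w = v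

open Classical in
/-- Vertex set of the subtree `t[v]` rooted at `v`. -/
noncomputable def desc (t : FTree) (v : ℕ) : Finset ℕ :=
  t.supp.filter (fun w => t.IsDesc v w)

/-- Height of the subtree `t[v]` rooted at `v`. -/
noncomputable def heightAt (t : FTree) (v : ℕ) : ℕ :=
  (t.desc v).sup (fun w => t.depth w) - t.depth v

/-- Height of the tree. -/
noncomputable def height (t : FTree) : ℕ := t.heightAt t.root

/-- The set of children of `v` in `t`. -/
def children (t : FTree) (v : ℕ) : Finset ℕ :=
  t.supp.filter (fun w => t.par w = v ∧ w ≠ t.root)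

open Classical in
/-- `γ_h(v)`: number of children of `v` whose subtree has height `h`. -/
noncomputable def gam (t : FTree) (v h : ℕ) : ℕ :=
  ((t.children v).filter (fun c => t.heightAt c = h)).card

/-- The subtree of `t` rooted at `v` is isomorphic (as an unordered rooted tree)
to the subtree of `s` rooted at `w`: a bijection between the vertex sets sending
root to root and commuting with the parent maps (i.e. mapping edges to edges). -/
def SubtreeIso (t : FTree) (v : ℕ) (s : FTree) (w : ℕ) : Prop :=
  ∃ φ : ℕ → ℕ, Set.BijOn φ (t.desc v : Set ℕ) (s.desc w : Set ℕ) ∧ φ v = w ∧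
    ∀ x ∈ t.desc v, x ≠ v → φ (t.par x) = s.par (φ x)

/-- Isomorphism of rooted trees. -/
def TreeIso (t s : FTree) : Prop := SubtreeIso t t.root s s.root

/-- A tree is self-nested if any two of its subtrees of the same height
are isomorphic. -/
def SelfNested (t : FTree) : Prop :=
  ∀ v ∈ t.supp, ∀ w ∈ t.supp, t.heightAt v = t.heightAt w → SubtreeIso t v t w

open Classical in
/-- Height profile entry `ρ_t(h1,h2)`: the multiset (family up to permutation) of
the values `γ_{h2}(v)` over all vertices `v` of `t` with `H(t[v]) = h1`. -/
noncomputable def profile (t : FTree) (h1 h2 : ℕ) : Multiset ℕ :=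
  (t.supp.filter (fun v => t.heightAt v = h1)).val.map (fun v => t.gam v h2)

/-- Number of vertices of `t`. -/
def numV (t : FTree) : ℕ := t.supp.card

/-- `a` is a (weak) ancestor of `b`. -/
def IsAnc (t : FTree) (a b : ℕ) : Prop := ∃ n, t.par^[n] b = a

/-- `a` is a proper ancestor of `b`. -/
def ProperAnc (t : FTree) (a b : ℕ) : Prop := a ≠ b ∧ t.IsAnc a b

/-- `l` is the least common ancestor of `a` and `b`. -/
def IsLCA (t : FTree) (a b l : ℕ) : Prop :=
  l ∈ t.supp ∧ t.IsAnc l a ∧ t.IsAnc l b ∧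
    ∀ m ∈ t.supp, t.IsAnc m a → t.IsAnc m b → t.IsAnc m l

/-- `φ`, restricted to the domain `D ⊆ t.supp`, is a constrained mapping in the
sense of Zhang from `t` to `s`: a one-to-one correspondence preserving the
ancestor order, satisfying moreover Zhang's condition on least common ancestors. -/
def ZhangMapping (t s : FTree) (D : Finset ℕ) (φ : ℕ → ℕ) : Prop :=
  D ⊆ t.supp ∧ (∀ x ∈ D, φ x ∈ s.supp) ∧ Set.InjOn φ (D : Set ℕ) ∧
  (∀ a ∈ D, ∀ b ∈ D, (t.ProperAnc a b ↔ s.ProperAnc (φ a) (φ b))) ∧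
  (∀ v1 ∈ D, ∀ v2 ∈ D, ∀ v3 ∈ D, ∀ l l',
    t.IsLCA v1 v2 l → s.IsLCA (φ v1) (φ v2) l' →
    (t.ProperAnc l v3 ↔ s.ProperAnc l' (φ v3)))

/-- Allowed inserting operation (AI): adding a new internal vertex `w` as a child of
`v`, making `w` the parent of the child `c` of `v`; allowed only if
`H(t[c]) + 1 < H(t[v])`. -/
def InsertAI (t θ : FTree) : Prop :=
  ∃ v c w, v ∈ t.supp ∧ c ∈ t.children v ∧ w ∉ t.supp ∧
    t.heightAt c + 1 < t.heightAt v ∧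
    θ.supp = insert w t.supp ∧ θ.root = t.root ∧
    θ.par w = v ∧ θ.par c = w ∧ ∀ x ∈ t.supp, x ≠ c → θ.par x = t.par x

/-- Allowed inserting operation (AS): attaching a tree `s` as a new child subtree of
`v`; allowed only if `H(s) + 1 ≤ H(t[v])`. -/
def InsertAS (t θ : FTree) : Prop :=
  ∃ (v : ℕ) (s : FTree), v ∈ t.supp ∧ Disjoint s.supp t.supp ∧
    s.height + 1 ≤ t.heightAt v ∧
    θ.supp = t.supp ∪ s.supp ∧ θ.root = t.root ∧ θ.par s.root = v ∧
    (∀ x ∈ t.supp, θ.par x = t.par x) ∧ (∀ x ∈ s.supp, x ≠ s.root → θ.par x = s.par x)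

/-- One allowed inserting operation. -/
def InsertStep (t θ : FTree) : Prop := InsertAI t θ ∨ InsertAS t θ

/-- Allowed deleting operation (DI): deleting an internal vertex `v`, child of `u`,
having a unique child `c` (which becomes a child of `u`); allowed only if `u` has
another child `v'` with `H(t[v']) ≥ H(t[v])`. -/
def DeleteDI (t θ : FTree) : Prop :=
  ∃ u v c, v ∈ t.children u ∧ t.children v = {c} ∧
    (∃ v' ∈ t.children u, v' ≠ v ∧ t.heightAt v ≤ t.heightAt v') ∧
    θ.supp = t.supp.erase v ∧ θ.root = t.root ∧ θ.par c = u ∧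
    ∀ x ∈ t.supp, x ≠ v → x ≠ c → θ.par x = t.par x

/-- Allowed deleting operation (DS): deleting the whole subtree rooted at a child `w`
of `v`; allowed only if `v` has another child `w'` with `H(t[w']) + 1 = H(t[v])`. -/
def DeleteDS (t θ : FTree) : Prop :=
  ∃ v w, w ∈ t.children v ∧
    (∃ w' ∈ t.children v, w' ≠ w ∧ t.heightAt w' + 1 = t.heightAt v) ∧
    θ.supp = t.supp \ t.desc w ∧ θ.root = t.root ∧
    ∀ x ∈ θ.supp, θ.par x = t.par x

/-- One allowed deleting operation. -/
def DeleteStep (t θ : FTree) : Prop := DeleteDI t θ ∨ DeleteDS t θ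

/-- A general single-vertex inserting operation: a new vertex `w` is added as a child
of `v`, and the vertices of a subset `C` of the children of `v` become children of `w`. -/
def GeneralInsert (t θ : FTree) : Prop :=
  ∃ (v w : ℕ) (C : Finset ℕ), v ∈ t.supp ∧ w ∉ t.supp ∧ C ⊆ t.children v ∧
    θ.supp = insert w t.supp ∧ θ.root = t.root ∧ θ.par w = v ∧
    (∀ x ∈ C, θ.par x = w) ∧ ∀ x ∈ t.supp, x ∉ C → θ.par x = t.par x

/-- Cost of a constrained mapping with domain `D`: vertices of `t` not in the domain
are deleted, vertices of `s` not in the image are inserted (unit costs). -/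
def mappingCost (t s : FTree) (D : Finset ℕ) (φ : ℕ → ℕ) : ℕ :=
  (t.numV - D.card) + (s.numV - (D.image φ).card)

/-- Zhang's constrained edit distance between unordered trees: the minimal cost
associated with a constrained mapping between `t` and `s`. -/
noncomputable def DZ (t s : FTree) : ℕ :=
  sInf { c | ∃ (D : Finset ℕ) (φ : ℕ → ℕ), ZhangMapping t s D φ ∧ c = mappingCost t s D φ }

end FTree

namespace FTree

lemma aux_iterate_mem (t : FTree) {x : ℕ} (hx : x ∈ t.supp) (n : ℕ) :
    t.par^[n] x ∈ t.supp := by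
  induction n with
  | zero => simpa
  | succ n ih => rw [Function.iterate_succ_apply']; exact t.par_mem _ ih

lemma aux_depth_eq (t : FTree) {x : ℕ} (hx : x ∈ t.supp) :
    t.depth x = Nat.find (t.reach x hx) := dif_pos hx

lemma aux_iterate_depth (t : FTree) {x : ℕ} (hx : x ∈ t.supp) :
    t.par^[t.depth x] x = t.root := by
  rw [aux_depth_eq t hx]; exact Nat.find_spec (t.reach x hx)

lemma aux_depth_min (t : FTree) {x : ℕ} (hx : x ∈ t.supp) {m : ℕ} (hm : m < t.depth x) :
    t.par^[m] x ≠ t.root := by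
  rw [aux_depth_eq t hx] at hm; exact Nat.find_min (t.reach x hx) hm

lemma aux_depth_le (t : FTree) {x : ℕ} (hx : x ∈ t.supp) {m : ℕ}
    (hm : t.par^[m] x = t.root) : t.depth x ≤ m := by
  rw [aux_depth_eq t hx]; exact Nat.find_min' (t.reach x hx) hm

lemma aux_iterate_root (t : FTree) (n : ℕ) : t.par^[n] t.root = t.root := by
  induction n with
  | zero => rfl
  | succ n ih => rw [Function.iterate_succ_apply', ih, t.par_root]

lemma aux_iterate_ge (t : FTree) {x : ℕ} (hx : x ∈ t.supp) {n : ℕ}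
    (hn : t.depth x ≤ n) : t.par^[n] x = t.root := by
  obtain ⟨k, rfl⟩ := Nat.exists_eq_add_of_le hn
  rw [Nat.add_comm, Function.iterate_add_apply, aux_iterate_depth t hx, aux_iterate_root]

lemma aux_depth_root (t : FTree) : t.depth t.root = 0 :=
  Nat.le_zero.mp (aux_depth_le t t.root_mem (by rfl))

lemma isDesc_iff (t : FTree) {u x : ℕ} :
    t.IsDesc u x ↔ x ∈ t.supp ∧ ∃ n, t.par^[n] x = u := by
  constructor
  · rintro ⟨hx, n, _, hn⟩; exact ⟨hx, n, hn⟩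
  · rintro ⟨hx, n, hn⟩
    refine ⟨hx, ?_⟩
    rcases le_or_gt n (t.depth x) with h | h
    · exact ⟨n, h, hn⟩
    · have : t.par^[n] x = t.root := aux_iterate_ge t hx h.le
      exact ⟨t.depth x, le_rfl, by rw [aux_iterate_depth t hx, ← this, hn]⟩

lemma aux_depth_iterate (t : FTree) {x : ℕ} (hx : x ∈ t.supp) {n : ℕ}
    (hn : n ≤ t.depth x) : t.depth (t.par^[n] x) = t.depth x - n := by
  have hy : t.par^[n] x ∈ t.supp := aux_iterate_mem t hx n
  have h1 : t.depth (t.par^[n] x) ≤ t.depth x - n := by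
    apply aux_depth_le t hy
    rw [← Function.iterate_add_apply]
    have : t.depth x - n + n = t.depth x := Nat.sub_add_cancel hn
    rw [this]; exact aux_iterate_depth t hx
  have h2 : t.depth x ≤ n + t.depth (t.par^[n] x) := by
    apply aux_depth_le t hx
    rw [Nat.add_comm, Function.iterate_add_apply]
    exact aux_iterate_depth t hy
  omega

lemma depth_le_of_isDesc (t : FTree) {u x : ℕ} (h : t.IsDesc u x) :
    t.depth u ≤ t.depth x := by
  obtain ⟨hx, n, hn, hpar⟩ := h
  have := aux_depth_iterate t hx hn
  rw [hpar] at this; omega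

lemma eq_of_isDesc_depth (t : FTree) {u x : ℕ} (h : t.IsDesc u x)
    (hd : t.depth u = t.depth x) : u = x := by
  obtain ⟨hx, n, hn, hpar⟩ := h
  have := aux_depth_iterate t hx hn
  rw [hpar] at this
  have : n = 0 := by omega
  rw [this] at hpar; exact hpar.symm

lemma isDesc_refl (t : FTree) {x : ℕ} (hx : x ∈ t.supp) : t.IsDesc x x :=
  (isDesc_iff t).mpr ⟨hx, 0, rfl⟩

lemma isDesc_trans (t : FTree) {a b c : ℕ} (hab : t.IsDesc a b) (hbc : t.IsDesc b c) :
    t.IsDesc a c := by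
  rw [isDesc_iff] at *
  obtain ⟨hb, n, hn⟩ := hab
  obtain ⟨hc, m, hm⟩ := hbc
  exact ⟨hc, n + m, by rw [Function.iterate_add_apply, hm, hn]⟩

lemma isDesc_total (t : FTree) {u w x : ℕ} (hu : t.IsDesc u x) (hw : t.IsDesc w x) :
    t.IsDesc u w ∨ t.IsDesc w u := by
  obtain ⟨hx, n, hn, hpn⟩ := hu
  obtain ⟨_, m, hm, hpm⟩ := hw
  rcases le_or_gt n m with h | h
  · right
    refine (isDesc_iff t).mpr ⟨hpn ▸ aux_iterate_mem t hx n, m - n, ?_⟩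
    rw [← hpn, ← Function.iterate_add_apply, Nat.sub_add_cancel h, hpm]
  · left
    refine (isDesc_iff t).mpr ⟨hpm ▸ aux_iterate_mem t hx m, n - m, ?_⟩
    rw [← hpm, ← Function.iterate_add_apply, Nat.sub_add_cancel h.le, hpn]

lemma depth_par_add_one (t : FTree) {x : ℕ} (hx : x ∈ t.supp) (hxr : x ≠ t.root) :
    t.depth x = t.depth (t.par x) + 1 := by
  have h1 : 1 ≤ t.depth x := by
    rcases Nat.eq_zero_or_pos (t.depth x) with h | h
    · exfalso; apply hxr; have := aux_iterate_depth t hx; rwa [h] at this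
    · exact h
  have := aux_depth_iterate t hx h1
  simp only [Function.iterate_one] at this
  omega

lemma mem_desc (t : FTree) {u x : ℕ} : x ∈ t.desc u ↔ t.IsDesc u x := by
  classical
  simp only [desc, Finset.mem_filter]
  exact ⟨fun h => h.2, fun h => ⟨h.1, h⟩⟩

lemma self_mem_desc (t : FTree) {u : ℕ} (hu : u ∈ t.supp) : u ∈ t.desc u :=
  (mem_desc t).mpr (isDesc_refl t hu)

lemma mem_children (t : FTree) {v x : ℕ} :
    x ∈ t.children v ↔ x ∈ t.supp ∧ t.par x = v ∧ x ≠ t.root := by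
  simp [children]

lemma isDesc_of_child (t : FTree) {v x : ℕ} (h : x ∈ t.children v) : t.IsDesc v x := by
  rw [mem_children] at h
  exact (isDesc_iff t).mpr ⟨h.1, 1, h.2.1⟩

lemma isDesc_mem (t : FTree) {u x : ℕ} (h : t.IsDesc u x) : x ∈ t.supp := h.1

lemma desc_subset (t : FTree) {a b : ℕ} (h : t.IsDesc a b) : t.desc b ⊆ t.desc a := by
  intro x hx
  rw [mem_desc] at hx ⊢
  exact isDesc_trans t h hx

lemma heightAt_eq (t : FTree) (u : ℕ) :
    t.heightAt u = (t.desc u).sup t.depth - t.depth u := rfl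

end FTree

/-- Let `w` be a child of `v` whose set of children is exactly `{c}`,
and let `θ` be obtained from `t` by deleting the internal vertex `w`, its unique child
`c` becoming a child of `v`. Then every vertex `u` of `θ` satisfies
`H(θ[u]) = H(t[u])` if and only if `v` has a child `w' ≠ w` with
`H(t[w']) + 1 = H(t[v])`. -/
theorem delete_internal_preserves_heights_iff (t θ : FTree) (v w c : ℕ)
    (hv : v ∈ t.supp) (hw : w ∈ t.children v) (hwc : t.children w = {c})
    (hsupp : θ.supp = t.supp.erase w) (hroot : θ.root = t.root)
    (hparc : θ.par c = v)
    (hpar : ∀ x ∈ t.supp, x ≠ w → x ≠ c → θ.par x = t.par x) :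
    (∀ u ∈ θ.supp, θ.heightAt u = t.heightAt u) ↔
      ∃ w' ∈ t.children v, w' ≠ w ∧ t.heightAt w' + 1 = t.heightAt v := by
  classical
  open FTree in
  obtain ⟨hwmem, hparw, hwroot⟩ := (FTree.mem_children t).mp hw
  have hcmem0 : c ∈ t.children w := by rw [hwc]; exact Finset.mem_singleton_self c
  obtain ⟨hcmem, hparc', hcroot⟩ := (FTree.mem_children t).mp hcmem0
  have hdw : t.depth w = t.depth v + 1 := by
    rw [t.depth_par_add_one hwmem hwroot, hparw]
  have hdc : t.depth c = t.depth v + 2 := by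
    rw [t.depth_par_add_one hcmem hcroot, hparc']; omega
  have hvw : v ≠ w := by intro h; rw [h] at hdw; omega
  have hcw : c ≠ w := by intro h; rw [h] at hdc; omega
  have hcv : c ≠ v := by intro h; rw [h] at hdc; omega
  have hmemθ : ∀ x, x ∈ θ.supp ↔ (x ∈ t.supp ∧ x ≠ w) := by
    intro x; rw [hsupp, Finset.mem_erase]; tauto
  have hvmemθ : v ∈ θ.supp := (hmemθ v).mpr ⟨hv, hvw⟩
  have hcmemθ : c ∈ θ.supp := (hmemθ c).mpr ⟨hcmem, hcw⟩
  -- parents different from w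
  have hparnw : ∀ x ∈ t.supp, x ≠ c → t.par x ≠ w := by
    intro x hx hxc h
    have hxroot : x ≠ t.root := by
      intro hr; rw [hr, t.par_root] at h; exact hwroot h.symm
    have : x ∈ t.children w := (FTree.mem_children t).mpr ⟨hx, h, hxroot⟩
    rw [hwc, Finset.mem_singleton] at this; exact hxc this
  have hθclos : ∀ x ∈ t.supp, x ≠ w → θ.par x ∈ t.supp ∧ θ.par x ≠ w := by
    intro x hx hxw
    by_cases h : x = c
    · subst h; rw [hparc]; exact ⟨hv, hvw⟩
    · rw [hpar x hx hxw h]; exact ⟨t.par_mem x hx, hparnw x hx h⟩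
  -- chains transfer from t to θ
  have hC : ∀ n : ℕ, ∀ x ∈ t.supp, x ≠ w → ∀ u, u ≠ w → t.par^[n] x = u →
      ∃ m, θ.par^[m] x = u := by
    intro n
    induction n using Nat.strong_induction_on with
    | _ n ih =>
      intro x hx hxw u huw hit
      cases n with
      | zero => exact ⟨0, hit⟩
      | succ n =>
        by_cases hxc : x = c
        · subst hxc
          rw [Function.iterate_succ_apply, hparc'] at hit
          cases n with
          | zero => exact absurd hit.symm huw
          | succ n =>
            rw [Function.iterate_succ_apply, hparw] at hit
            obtain ⟨m, hm⟩ := ih n (by omega) v hv hvw u huw hit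
            exact ⟨m + 1, by rw [Function.iterate_succ_apply, hparc]; exact hm⟩
        · rw [Function.iterate_succ_apply] at hit
          obtain ⟨m, hm⟩ := ih n (by omega) (t.par x) (t.par_mem x hx)
            (hparnw x hx hxc) u huw hit
          exact ⟨m + 1, by rw [Function.iterate_succ_apply, hpar x hx hxw hxc]; exact hm⟩
  -- chains transfer from θ to t
  have hC' : ∀ n : ℕ, ∀ x ∈ t.supp, x ≠ w → ∀ u, θ.par^[n] x = u →
      ∃ m, t.par^[m] x = u := by
    intro n
    induction n with
    | zero => intro x hx hxw u hit; exact ⟨0, hit⟩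
    | succ n ih =>
      intro x hx hxw u hit
      rw [Function.iterate_succ_apply] at hit
      obtain ⟨hy, hyw⟩ := hθclos x hx hxw
      obtain ⟨m, hm⟩ := ih (θ.par x) hy hyw u hit
      by_cases hxc : x = c
      · subst hxc
        rw [hparc] at hm
        refine ⟨m + 1 + 1, ?_⟩
        rw [Function.iterate_succ_apply, hparc', Function.iterate_succ_apply, hparw]
        exact hm
      · rw [hpar x hx hxw hxc] at hm
        exact ⟨m + 1, by rw [Function.iterate_succ_apply]; exact hm⟩
  have hB : ∀ u, u ≠ w → ∀ x ∈ t.supp, x ≠ w → (θ.IsDesc u x ↔ t.IsDesc u x) := by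
    intro u huw x hx hxw
    have hxθ : x ∈ θ.supp := (hmemθ x).mpr ⟨hx, hxw⟩
    rw [FTree.isDesc_iff, FTree.isDesc_iff]
    constructor
    · rintro ⟨_, n, hn⟩; exact ⟨hx, hC' n x hx hxw u hn⟩
    · rintro ⟨_, n, hn⟩; exact ⟨hxθ, hC n x hx hxw u huw hn⟩
  have hdesc : ∀ u, u ≠ w → θ.desc u = (t.desc u).erase w := by
    intro u huw
    ext x
    simp only [FTree.mem_desc, Finset.mem_erase]
    constructor
    · intro h
      have hxθ := (hmemθ x).mp (FTree.isDesc_mem θ h)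
      exact ⟨hxθ.2, (hB u huw x hxθ.1 hxθ.2).mp h⟩
    · rintro ⟨hxw, h⟩
      exact (hB u huw x (FTree.isDesc_mem t h) hxw).mpr h
  -- depth in θ
  have hA : ∀ d : ℕ, ∀ x ∈ t.supp, x ≠ w → t.depth x = d →
      (t.IsDesc c x → θ.depth x + 1 = t.depth x) ∧
      (¬ t.IsDesc c x → θ.depth x = t.depth x) := by
    intro d
    induction d using Nat.strong_induction_on with
    | _ d ih =>
      intro x hx hxw hdx
      by_cases hxr : x = t.root
      · subst hxr
        have h0 : t.depth t.root = 0 := t.aux_depth_root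
        have hcnot : ¬ t.IsDesc c t.root := by
          intro h; have := t.depth_le_of_isDesc h; omega
        refine ⟨fun h => absurd h hcnot, fun _ => ?_⟩
        have hθ0 : θ.depth t.root = 0 := by rw [← hroot]; exact θ.aux_depth_root
        rw [hθ0, h0]
      · by_cases hxc : x = c
        · rw [hxc] at hdx ⊢
          have hcθr : c ≠ θ.root := by rw [hroot]; exact hcroot
          have h1 : θ.depth c = θ.depth (θ.par c) + 1 := θ.depth_par_add_one hcmemθ hcθr
          rw [hparc] at h1
          have hnotdesc : ¬ t.IsDesc c v := by
            intro h; have := t.depth_le_of_isDesc h; omega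
          have hv' := (ih (t.depth v) (by omega) v hv hvw rfl).2 hnotdesc
          exact ⟨fun _ => by omega, fun h => absurd (t.isDesc_refl hcmem) h⟩
        · have hp : t.par x ∈ t.supp := t.par_mem x hx
          have hpw : t.par x ≠ w := hparnw x hx hxc
          have hdp : t.depth x = t.depth (t.par x) + 1 := t.depth_par_add_one hx hxr
          have hxθ : x ∈ θ.supp := (hmemθ x).mpr ⟨hx, hxw⟩
          have hxθr : x ≠ θ.root := by rw [hroot]; exact hxr
          have h1 : θ.depth x = θ.depth (θ.par x) + 1 := θ.depth_par_add_one hxθ hxθr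
          rw [hpar x hx hxw hxc] at h1
          have hih := ih (t.depth (t.par x)) (by omega) (t.par x) hp hpw rfl
          have hequiv : t.IsDesc c x ↔ t.IsDesc c (t.par x) := by
            constructor
            · intro h
              obtain ⟨_, n, hn⟩ := (FTree.isDesc_iff t).mp h
              cases n with
              | zero => exact absurd hn hxc
              | succ n =>
                rw [Function.iterate_succ_apply] at hn
                exact (FTree.isDesc_iff t).mpr ⟨hp, n, hn⟩
            · intro h
              obtain ⟨_, n, hn⟩ := (FTree.isDesc_iff t).mp h
              refine (FTree.isDesc_iff t).mpr ⟨hx, n + 1, ?_⟩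
              rw [Function.iterate_succ_apply]; exact hn
          have hdcle : t.IsDesc c (t.par x) → 2 ≤ t.depth (t.par x) := by
            intro h; have := t.depth_le_of_isDesc h; omega
          constructor
          · intro h
            have := hih.1 (hequiv.mp h)
            have := hdcle (hequiv.mp h)
            omega
          · intro h
            have := hih.2 (fun hh => h (hequiv.mpr hh))
            omega
  have hdθ : ∀ x ∈ t.supp, x ≠ w →
      (t.IsDesc c x → θ.depth x + 1 = t.depth x) ∧
      (¬ t.IsDesc c x → θ.depth x = t.depth x) :=
    fun x hx hxw => hA (t.depth x) x hx hxw rfl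
  have hθle : ∀ x ∈ t.supp, x ≠ w → θ.depth x ≤ t.depth x := by
    intro x hx hxw
    by_cases h : t.IsDesc c x
    · have := (hdθ x hx hxw).1 h; omega
    · have := (hdθ x hx hxw).2 h; omega
  have hcw_desc : ∀ x, t.IsDesc c x → t.IsDesc w x := by
    intro x h
    obtain ⟨hx, n, hn⟩ := (FTree.isDesc_iff t).mp h
    refine (FTree.isDesc_iff t).mpr ⟨hx, n + 1, ?_⟩
    rw [Function.iterate_succ_apply', hn, hparc']
  have hwc_desc : ∀ x, t.IsDesc w x → x ≠ w → t.IsDesc c x := by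
    intro x h hxw
    obtain ⟨hx, n, hn, hpn⟩ := h
    cases n with
    | zero => exact absurd hpn hxw
    | succ n =>
      have hy : t.par^[n] x ∈ t.supp := t.aux_iterate_mem hx n
      have hyroot : t.par^[n] x ≠ t.root := t.aux_depth_min hx (by omega)
      have hch : t.par^[n] x ∈ t.children w := by
        refine (FTree.mem_children t).mpr ⟨hy, ?_, hyroot⟩
        rw [Function.iterate_succ_apply'] at hpn; exact hpn
      rw [hwc, Finset.mem_singleton] at hch
      exact (FTree.isDesc_iff t).mpr ⟨hx, n, hch⟩
  have hanc_v : ∀ u, t.IsDesc u w → u ≠ w → t.IsDesc u v := by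
    intro u h huw
    obtain ⟨_, n, hn, hpn⟩ := h
    cases n with
    | zero => exact absurd hpn.symm huw
    | succ n =>
      rw [Function.iterate_succ_apply, hparw] at hpn
      exact (FTree.isDesc_iff t).mpr ⟨hv, n, hpn⟩
  -- Case 1: u in the subtree of c
  have hKEY1 : ∀ u, t.IsDesc c u → θ.heightAt u = t.heightAt u := by
    intro u hcu
    have humem : u ∈ t.supp := t.isDesc_mem hcu
    have hdcu : t.depth c ≤ t.depth u := t.depth_le_of_isDesc hcu
    have huw : u ≠ w := by intro h; rw [h] at hdcu; omega
    have hwnot : w ∉ t.desc u := by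
      rw [FTree.mem_desc]
      intro h
      have := t.depth_le_of_isDesc h
      omega
    have hde : θ.desc u = t.desc u := by
      rw [hdesc u huw, Finset.erase_eq_of_notMem hwnot]
    have hall : ∀ x ∈ t.desc u, θ.depth x + 1 = t.depth x := by
      intro x hx
      rw [FTree.mem_desc] at hx
      have hcx : t.IsDesc c x := t.isDesc_trans hcu hx
      have hxmem : x ∈ t.supp := t.isDesc_mem hx
      have hdcx := t.depth_le_of_isDesc hcx
      have hxw : x ≠ w := by intro h; rw [h] at hdcx; omega
      exact (hdθ x hxmem hxw).1 hcx
    rw [FTree.heightAt_eq, FTree.heightAt_eq, hde]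
    have hA1 : t.depth u ≤ (t.desc u).sup t.depth := Finset.le_sup (t.self_mem_desc humem)
    have hud : θ.depth u + 1 = t.depth u := hall u (t.self_mem_desc humem)
    have h2 : (t.desc u).sup θ.depth ≤ (t.desc u).sup t.depth - 1 := by
      apply Finset.sup_le
      intro x hx
      have h3 : t.depth x ≤ (t.desc u).sup t.depth := Finset.le_sup hx
      have := hall x hx
      omega
    have h1 : (t.desc u).sup t.depth ≤ (t.desc u).sup θ.depth + 1 := by
      apply Finset.sup_le
      intro x hx
      have h3 : θ.depth x ≤ (t.desc u).sup θ.depth := Finset.le_sup hx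
      have := hall x hx
      omega
    omega
  -- Case 2: u neither an ancestor of w nor in the subtree of c
  have hKEY2 : ∀ u ∈ θ.supp, ¬ t.IsDesc u w → ¬ t.IsDesc c u →
      θ.heightAt u = t.heightAt u := by
    intro u huθ h1 h2
    obtain ⟨humem, huw⟩ := (hmemθ u).mp huθ
    have hwnot : w ∉ t.desc u := by rw [FTree.mem_desc]; exact h1
    have hde : θ.desc u = t.desc u := by
      rw [hdesc u huw, Finset.erase_eq_of_notMem hwnot]
    have hall : ∀ x ∈ t.desc u, θ.depth x = t.depth x := by
      intro x hx
      rw [FTree.mem_desc] at hx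
      have hxmem := t.isDesc_mem hx
      have hncx : ¬ t.IsDesc c x := by
        intro hcx
        have hwx : t.IsDesc w x := hcw_desc x hcx
        rcases t.isDesc_total hx hwx with h | h
        · exact h1 h
        · exact h2 (hwc_desc u h huw)
      have hxw : x ≠ w := by
        intro he; rw [he] at hx; exact h1 hx
      exact (hdθ x hxmem hxw).2 hncx
    rw [FTree.heightAt_eq, FTree.heightAt_eq, hde,
      Finset.sup_congr rfl hall, hall u (t.self_mem_desc humem)]
  -- facts about v
  have hwdescv : w ∈ t.desc v := (FTree.mem_desc t).mpr (t.isDesc_of_child hw)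
  have hcdescv : c ∈ t.desc v :=
    (FTree.mem_desc t).mpr (t.isDesc_trans (t.isDesc_of_child hw) (t.isDesc_of_child hcmem0))
  have hStv2 : t.depth v + 2 ≤ (t.desc v).sup t.depth := by
    have := Finset.le_sup (f := t.depth) hcdescv; omega
  have hdvθ : θ.depth v = t.depth v :=
    (hdθ v hv hvw).2 (fun h => by have := t.depth_le_of_isDesc h; omega)
  have hSθle : ∀ u, u ≠ w → (θ.desc u).sup θ.depth ≤ (t.desc u).sup t.depth := by
    intro u huw
    rw [hdesc u huw]
    apply Finset.sup_le
    intro x hx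
    rw [Finset.mem_erase] at hx
    have hx2 := (FTree.mem_desc t).mp hx.2
    have := hθle x (t.isDesc_mem hx2) hx.1
    exact le_trans this (Finset.le_sup hx.2)
  have hvsup_le := hSθle v hvw
  have hSθv_ge : t.depth v ≤ (θ.desc v).sup θ.depth := by
    have h := Finset.le_sup (f := θ.depth) (θ.self_mem_desc hvmemθ)
    omega
  have hveq_sup : (θ.heightAt v = t.heightAt v) ↔
      ((θ.desc v).sup θ.depth = (t.desc v).sup t.depth) := by
    rw [FTree.heightAt_eq, FTree.heightAt_eq, hdvθ]
    omega
  -- (b): sup preserved at v → a sibling of w attains the height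
  have hpart_b : (θ.desc v).sup θ.depth = (t.desc v).sup t.depth →
      ∃ w' ∈ t.children v, w' ≠ w ∧ t.heightAt w' + 1 = t.heightAt v := by
    intro hSeq
    have hne : (θ.desc v).Nonempty := ⟨v, θ.self_mem_desc hvmemθ⟩
    obtain ⟨x, hxmem, hxsup⟩ := Finset.exists_mem_eq_sup _ hne θ.depth
    rw [hdesc v hvw, Finset.mem_erase] at hxmem
    obtain ⟨hxw, hxdesc⟩ := hxmem
    have hxd := (FTree.mem_desc t).mp hxdesc
    have hxs := t.isDesc_mem hxd
    have hxle : t.depth x ≤ (t.desc v).sup t.depth := Finset.le_sup hxdesc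
    have hθx : θ.depth x ≤ t.depth x := hθle x hxs hxw
    have hxeq1 : t.depth x = (t.desc v).sup t.depth := by omega
    have hxeq2 : θ.depth x = t.depth x := by omega
    have hncx : ¬ t.IsDesc c x := by
      intro h
      have := (hdθ x hxs hxw).1 h
      omega
    have hnwx : ¬ t.IsDesc w x := fun h => hncx (hwc_desc x h hxw)
    have hxv : x ≠ v := by
      intro h; rw [h] at hxeq1; omega
    obtain ⟨_, n, hn, hpn⟩ := hxd
    have hdvx : t.depth (t.par^[n] x) = t.depth x - n := t.aux_depth_iterate hxs hn
    rw [hpn] at hdvx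
    have hn1 : 1 ≤ n := by
      rcases Nat.eq_zero_or_pos n with h | h
      · rw [h] at hpn; exact absurd hpn hxv
      · exact h
    set w' := t.par^[n-1] x with hw'
    have hw's : w' ∈ t.supp := t.aux_iterate_mem hxs (n-1)
    have hparw' : t.par w' = v := by
      have he : n = n - 1 + 1 := by omega
      rw [he, Function.iterate_succ_apply'] at hpn
      exact hpn
    have hw'root : w' ≠ t.root := t.aux_depth_min hxs (by omega)
    have hw'child : w' ∈ t.children v := (FTree.mem_children t).mpr ⟨hw's, hparw', hw'root⟩
    have hw'x : t.IsDesc w' x := (FTree.isDesc_iff t).mpr ⟨hxs, n - 1, hw'.symm⟩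
    have hw'w : w' ≠ w := by intro h; rw [h] at hw'x; exact hnwx hw'x
    refine ⟨w', hw'child, hw'w, ?_⟩
    have hdw' : t.depth w' = t.depth v + 1 := by
      rw [t.depth_par_add_one hw's hw'root, hparw']
    have hsup1 : (t.desc w').sup t.depth ≤ (t.desc v).sup t.depth :=
      Finset.sup_mono (t.desc_subset (t.isDesc_of_child hw'child))
    have hsup2 : t.depth x ≤ (t.desc w').sup t.depth :=
      Finset.le_sup ((FTree.mem_desc t).mpr hw'x)
    rw [FTree.heightAt_eq, FTree.heightAt_eq, hdw']
    omega
  -- (c): a sibling of w attains the height → sup preserved at v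
  have hpart_c : ∀ w' ∈ t.children v, w' ≠ w → t.heightAt w' + 1 = t.heightAt v →
      (θ.desc v).sup θ.depth = (t.desc v).sup t.depth := by
    intro w' hw'child hw'w hh
    obtain ⟨hw's, hparw', hw'root⟩ := (FTree.mem_children t).mp hw'child
    have hdw' : t.depth w' = t.depth v + 1 := by
      rw [t.depth_par_add_one hw's hw'root, hparw']
    have hsup1 : (t.desc w').sup t.depth ≤ (t.desc v).sup t.depth :=
      Finset.sup_mono (t.desc_subset (t.isDesc_of_child hw'child))
    have hsup0 : t.depth w' ≤ (t.desc w').sup t.depth := Finset.le_sup (t.self_mem_desc hw's)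
    rw [FTree.heightAt_eq, FTree.heightAt_eq, hdw'] at hh
    have hSw' : (t.desc w').sup t.depth = (t.desc v).sup t.depth := by omega
    obtain ⟨x, hxmem, hxsup⟩ :=
      Finset.exists_mem_eq_sup _ ⟨w', t.self_mem_desc hw's⟩ t.depth
    have hxd := (FTree.mem_desc t).mp hxmem
    have hxs := t.isDesc_mem hxd
    have hnwx : ¬ t.IsDesc w x := by
      intro h
      rcases t.isDesc_total hxd h with h2 | h2
      · exact hw'w (t.eq_of_isDesc_depth h2 (by omega))
      · exact hw'w (t.eq_of_isDesc_depth h2 (by omega)).symm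
    have hxw : x ≠ w := by
      intro h; rw [h] at hnwx; exact hnwx (t.isDesc_refl hwmem)
    have hncx : ¬ t.IsDesc c x := fun h => hnwx (hcw_desc x h)
    have hθx : θ.depth x = t.depth x := (hdθ x hxs hxw).2 hncx
    have hxdescv : x ∈ θ.desc v := by
      rw [hdesc v hvw, Finset.mem_erase]
      exact ⟨hxw, (FTree.mem_desc t).mpr (t.isDesc_trans (t.isDesc_of_child hw'child) hxd)⟩
    have hge := Finset.le_sup (f := θ.depth) hxdescv
    omega
  -- Case 3: u a proper ancestor of w
  have hKEY3 : (θ.desc v).sup θ.depth = (t.desc v).sup t.depth →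
      ∀ u ∈ θ.supp, t.IsDesc u w → θ.heightAt u = t.heightAt u := by
    intro hSeq u huθ huw_desc
    obtain ⟨humem, huw⟩ := (hmemθ u).mp huθ
    have huv : t.IsDesc u v := hanc_v u huw_desc huw
    have hdu_le : t.depth u ≤ t.depth w := t.depth_le_of_isDesc huw_desc
    have hncu : ¬ t.IsDesc c u := by
      intro h; have := t.depth_le_of_isDesc h; omega
    have hθu : θ.depth u = t.depth u := (hdθ u humem huw).2 hncu
    rw [FTree.heightAt_eq, FTree.heightAt_eq, hθu]
    have hle := hSθle u huw
    have hgesup : (t.desc u).sup t.depth ≤ (θ.desc u).sup θ.depth := by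
      obtain ⟨x, hxmem, hxsup⟩ :=
        Finset.exists_mem_eq_sup _ ⟨u, t.self_mem_desc humem⟩ t.depth
      have hxd := (FTree.mem_desc t).mp hxmem
      have hxs := t.isDesc_mem hxd
      by_cases hwx : t.IsDesc w x
      · have hxv : x ∈ t.desc v :=
          (FTree.mem_desc t).mpr (t.isDesc_trans (t.isDesc_of_child hw) hwx)
        have h1 : t.depth x ≤ (t.desc v).sup t.depth := Finset.le_sup hxv
        have h2 : (θ.desc v).sup θ.depth ≤ (θ.desc u).sup θ.depth := by
          rw [hdesc v hvw, hdesc u huw]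
          exact Finset.sup_mono (Finset.erase_subset_erase _ (t.desc_subset huv))
        omega
      · have hxw : x ≠ w := by
          intro h; rw [h] at hwx; exact hwx (t.isDesc_refl hwmem)
        have hncx : ¬ t.IsDesc c x := fun h => hwx (hcw_desc x h)
        have hθx : θ.depth x = t.depth x := (hdθ x hxs hxw).2 hncx
        have hxθdesc : x ∈ θ.desc u := by
          rw [hdesc u huw, Finset.mem_erase]; exact ⟨hxw, hxmem⟩
        have := Finset.le_sup (f := θ.depth) hxθdesc
        omega
    omega
  -- assembly
  have hveq : θ.heightAt v = t.heightAt v ↔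
      ∃ w' ∈ t.children v, w' ≠ w ∧ t.heightAt w' + 1 = t.heightAt v := by
    rw [hveq_sup]
    constructor
    · exact hpart_b
    · rintro ⟨w', h1, h2, h3⟩; exact hpart_c w' h1 h2 h3
  constructor
  · intro hall
    exact hveq.mp (hall v hvmemθ)
  · intro hR u huθ
    have hSeq := hveq_sup.mp (hveq.mpr hR)
    by_cases h1 : t.IsDesc c u
    · exact hKEY1 u h1
    · by_cases h2 : t.IsDesc u w
      · exact hKEY3 hSeq u huθ h2
      · exact hKEY2 u huθ h2 h1
end

section
/- If a finite unordered rooted tree θ is obtained from a tree τ by a sequence of inserting operations whose induced identity mapping M_{τ→θ} is a constrained mapping in the sense of Zhang, then Zhang's constrained edit distance between θ and τ satisfies D_Z(θ, τ) = #V(θ) − #V(τ), the difference of their numbers of vertices. -/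
/-- If `θ` is obtained from `t` by a sequence of single-vertex
inserting operations and the induced identity mapping `M_{t→θ}` is a constrained mapping
in the sense of Zhang, then Zhang's constrained edit distance between `θ` and `t` equals
the difference of their numbers of vertices. -/
theorem dz_eq_numV_sub (t θ : FTree)
    (hins : Relation.ReflTransGen FTree.GeneralInsert t θ)
    (hmap : FTree.ZhangMapping t θ t.supp id) :
    FTree.DZ θ t = θ.numV - t.numV := by

  -- t.supp ⊆ θ.supp from the insertion sequence
  have hsub : t.supp ⊆ θ.supp := by
    clear hmap
    induction hins with
    | refl => exact subset_rfl
    | tail _ hstep ih =>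
        obtain ⟨v, w, C, _, _, _, hsupp, _⟩ := hstep
        rw [hsupp]
        exact ih.trans (Finset.subset_insert _ _)
  obtain ⟨hD, himg, hinj, hanc, hlca⟩ := hmap
  -- the reversed identity mapping is a Zhang mapping from θ to t
  have hrev : FTree.ZhangMapping θ t t.supp id := by
    refine ⟨hsub, fun x hx => hx, Set.injOn_id _, ?_, ?_⟩
    · intro a ha b hb
      exact (hanc a ha b hb).symm
    · intro v1 h1 v2 h2 v3 h3 l l' hl hl'
      exact (hlca v1 h1 v2 h2 v3 h3 l' l hl' hl).symm
  have hcost : FTree.mappingCost θ t t.supp id = θ.numV - t.numV := by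
    simp [FTree.mappingCost, FTree.numV, Finset.image_id]
  have hmem : θ.numV - t.numV ∈
      { c | ∃ (D : Finset ℕ) (φ : ℕ → ℕ), FTree.ZhangMapping θ t D φ ∧
        c = FTree.mappingCost θ t D φ } :=
    ⟨t.supp, id, hrev, hcost.symm⟩
  refine le_antisymm (Nat.sInf_le hmem) (le_csInf ⟨_, hmem⟩ ?_)
  rintro c ⟨D, φ, ⟨hD', himg', hinj', -, -⟩, rfl⟩
  -- lower bound: D.card = (D.image φ).card ≤ t.numV
  have hcard : D.card = (D.image φ).card := (Finset.card_image_of_injOn hinj').symm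
  have hle : D.card ≤ t.numV := by
    rw [hcard]
    exact Finset.card_le_card (fun x hx => by
      obtain ⟨y, hy, rfl⟩ := Finset.mem_image.mp hx
      exact himg' y hy)
  calc θ.numV - t.numV ≤ θ.numV - D.card := Nat.sub_le_sub_left hle _
    _ ≤ _ := Nat.le_add_right _ _
end
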